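/- Let F be a finite field of characteristic 2 and G a finite 2-group. Then |F|^{(|G| + |G{2}|)/2 - 1} divides |V_*(FG)|, where G{2} = {g ∈ G : g² = 1} and * is the canonical involution. -/

import Mathlib

set_option linter.unusedSectionVars false
set_option synthInstance.maxHeartbeats 1000000
set_option maxHeartbeats 1000000

noncomputable def aug (F G : Type*) [CommSemiring F] [Monoid G] :
    MonoidAlgebra F G →ₐ[F] F := MonoidAlgebra.lift F F G 1

noncomputable def dia {F G : Type*} [Semiring F] (σ : G → G) :
    MonoidAlgebra F G → MonoidAlgebra F G := fun x => MonoidAlgebra.ofCoeff (Finsupp.mapDomain σ x.coeff)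

section Basic
variable {F : Type*} [Field F] {G : Type*} [Group G]

lemma aug_single (g : G) (a : F) : aug F G (MonoidAlgebra.single g a) = a := by
  simp [aug, MonoidAlgebra.lift_single]

lemma aug_sum [Fintype G] (x : MonoidAlgebra F G) : aug F G x = ∑ g : G, x.coeff g := by
  induction x using MonoidAlgebra.induction_linear with
  | zero => simp
  | add f g hf hg =>
      rw [map_add, hf, hg, ← Finset.sum_add_distrib]
      exact Finset.sum_congr rfl fun a _ => rfl
  | single g a =>
      rw [aug_single]
      classical
      simp [Finsupp.single_apply, MonoidAlgebra.coeff_single]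

lemma dia_single (g : G) (a : F) :
    dia (fun g : G => g⁻¹) (MonoidAlgebra.single g a) = MonoidAlgebra.single g⁻¹ a := by
  simp [dia, Finsupp.mapDomain_single, MonoidAlgebra.coeff_single, MonoidAlgebra.ofCoeff_single]

lemma dia_apply (x : MonoidAlgebra F G) (h : G) :
    (dia (fun g : G => g⁻¹) x).coeff h = x.coeff h⁻¹ := by
  have := Finsupp.mapDomain_apply (f := fun g : G => g⁻¹) (inv_injective) x.coeff h⁻¹
  simpa [dia] using this

lemma dia_dia (x : MonoidAlgebra F G) :
    dia (fun g : G => g⁻¹) (dia (fun g : G => g⁻¹) x) = x := by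
  simp [dia, ← Finsupp.mapDomain_comp, Function.comp_def]

lemma dia_add (x y : MonoidAlgebra F G) :
    dia (fun g : G => g⁻¹) (x + y) = dia (fun g : G => g⁻¹) x + dia (fun g : G => g⁻¹) y := by
  unfold dia; exact congrArg MonoidAlgebra.ofCoeff Finsupp.mapDomain_add

lemma dia_zero : dia (fun g : G => g⁻¹) (0 : MonoidAlgebra F G) = 0 := by
  simp [dia]

lemma dia_one : dia (fun g : G => g⁻¹) (1 : MonoidAlgebra F G) = 1 := by
  rw [MonoidAlgebra.one_def, dia_single, inv_one]

lemma dia_mul (x y : MonoidAlgebra F G) :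
    dia (fun g : G => g⁻¹) (x * y) = dia (fun g : G => g⁻¹) y * dia (fun g : G => g⁻¹) x := by
  induction x using MonoidAlgebra.induction_linear with
  | zero => simp [dia_zero]
  | add f g hf hg => rw [add_mul, dia_add, hf, hg, dia_add, mul_add]
  | single g a =>
    induction y using MonoidAlgebra.induction_linear with
    | zero => simp [dia_zero]
    | add f g hf hg => rw [mul_add, dia_add, hf, hg, dia_add, add_mul]
    | single h b =>
      rw [MonoidAlgebra.single_mul_single, dia_single, dia_single, dia_single,
        MonoidAlgebra.single_mul_single, mul_inv_rev, mul_comm b a]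

lemma aug_dia [Fintype G] (x : MonoidAlgebra F G) :
    aug F G (dia (fun g : G => g⁻¹) x) = aug F G x := by
  rw [aug_sum, aug_sum]
  rw [← Equiv.sum_comp (Equiv.inv G) (fun g => x.coeff g)]
  exact Finset.sum_congr rfl fun a _ => by simp [dia_apply]

end Basic

section Coeff
variable {F : Type*} [Field F] [CharP F 2] {G : Type*} [Group G] [Fintype G]

lemma mul_dia_apply (x : MonoidAlgebra F G) (k : G) :
    (x * dia (fun g : G => g⁻¹) x).coeff k = ∑ a : G, x.coeff (k * a⁻¹) * x.coeff a⁻¹ := by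
  rw [MonoidAlgebra.coeff_mul_apply_right]
  rw [Finsupp.sum_fintype _ _ (by intro a; simp)]
  exact Finset.sum_congr rfl fun a _ => by rw [dia_apply]

lemma mul_dia_apply_one (x : MonoidAlgebra F G) :
    (x * dia (fun g : G => g⁻¹) x).coeff 1 = (aug F G x) ^ 2 := by
  rw [mul_dia_apply, aug_sum, sum_pow_char]
  rw [← Equiv.sum_comp (Equiv.inv G) (fun g => x.coeff g ^ 2)]
  exact Finset.sum_congr rfl fun a _ => by simp [sq]

lemma mul_dia_apply_order_two (x : MonoidAlgebra F G) (k : G) (hk : k ^ 2 = 1) (hk1 : k ≠ 1) :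
    (x * dia (fun g : G => g⁻¹) x).coeff k = 0 := by
  have hkk : k * k = 1 := by rw [← sq]; exact hk
  have hkinv : k⁻¹ = k := inv_eq_of_mul_eq_one_right hkk
  rw [mul_dia_apply]
  refine Finset.sum_ninvolution (fun a => a * k) (fun a => ?_) (fun a _ h => ?_)
    (fun a => Finset.mem_univ _) (fun a => by beta_reduce; rw [mul_assoc, hkk, mul_one])
  · have h1 : k * (a * k)⁻¹ = a⁻¹ := by
      rw [mul_inv_rev, hkinv, ← mul_assoc, hkk, one_mul]
    have h2 : (a * k)⁻¹ = k * a⁻¹ := by rw [mul_inv_rev, hkinv]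
    rw [h1, h2, mul_comm (x.coeff a⁻¹) (x.coeff (k * a⁻¹))]
    exact CharTwo.add_self_eq_zero _
  · exact hk1 (mul_left_cancel (a := a) (by beta_reduce at h; rw [mul_one, h]))

lemma mul_dia_symm (x : MonoidAlgebra F G) (k : G) :
    (x * dia (fun g : G => g⁻¹) x).coeff k⁻¹ = (x * dia (fun g : G => g⁻¹) x).coeff k := by
  have h : dia (fun g : G => g⁻¹) (x * dia (fun g : G => g⁻¹) x)
      = x * dia (fun g : G => g⁻¹) x := by
    rw [dia_mul, dia_dia]
  conv_lhs => rw [← h]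
  rw [dia_apply, inv_inv]

end Coeff

section Unit
variable {F : Type*} [Field F] [Fintype F] [CharP F 2] {G : Type*} [Group G] [Fintype G]

set_option synthInstance.maxHeartbeats 1000000 in
instance : Finite (MonoidAlgebra F G) := by
  have : Finite (G →₀ F) :=
    Finite.of_injective (fun x : G →₀ F => (x : G → F)) DFunLike.coe_injective
  exact Finite.of_equiv _ MonoidAlgebra.coeffEquiv.symm

/-- In char 2 any nonzero submodule-like set closed under the G-action has odd "punctured"
cardinality; we handle it inline. -/
lemma no_left_zero_divisor (hG : IsPGroup 2 G) (x : MonoidAlgebra F G)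
    (hx : aug F G x = 1) (y : MonoidAlgebra F G) (hy : x * y = 0) : y = 0 := by
  classical
  by_contra hy0
  -- the punctured annihilator
  let α := {y' : MonoidAlgebra F G // x * y' = 0 ∧ y' ≠ 0}
  -- right multiplication action of G
  have hsmul : ∀ (g : G) (y' : α), x * (y'.1 * MonoidAlgebra.single g⁻¹ 1) = 0 ∧
      y'.1 * MonoidAlgebra.single g⁻¹ 1 ≠ 0 := by
    intro g y'
    constructor
    · rw [← mul_assoc, y'.2.1, zero_mul]
    · intro h
      apply y'.2.2
      have : (y'.1 * MonoidAlgebra.single g⁻¹ 1) * MonoidAlgebra.single g 1 = 0 := by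
        rw [h, zero_mul]
      rwa [mul_assoc, MonoidAlgebra.single_mul_single, inv_mul_cancel, one_mul,
        ← MonoidAlgebra.one_def, mul_one] at this
  letI : SMul G α := ⟨fun g y' => ⟨y'.1 * MonoidAlgebra.single g⁻¹ 1, hsmul g y'⟩⟩
  have smul_def : ∀ (g : G) (y' : α), (g • y').1 = y'.1 * MonoidAlgebra.single g⁻¹ 1 :=
    fun _ _ => rfl
  letI : MulAction G α :=
    { one_smul := by
        intro y'
        apply Subtype.ext
        rw [smul_def, inv_one, ← MonoidAlgebra.one_def, mul_one]
      mul_smul := by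
        intro g h y'
        apply Subtype.ext
        rw [smul_def, smul_def, smul_def, mul_assoc, MonoidAlgebra.single_mul_single,
          mul_inv_rev, one_mul] }
  -- cardinality of α is odd
  have hodd : ¬ (2 ∣ Nat.card α) := by
    -- the annihilator submodule
    let W : Submodule F (MonoidAlgebra F G) := LinearMap.ker (LinearMap.mulLeft F x)
    have hWmem : ∀ y' : MonoidAlgebra F G, y' ∈ W ↔ x * y' = 0 := by
      intro y'; simp [W, LinearMap.mem_ker, LinearMap.mulLeft_apply]
    haveI : Fintype (MonoidAlgebra F G) := Fintype.ofFinite _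
    haveI : Fintype α := Fintype.ofFinite _
    haveI : Fintype W := Fintype.ofFinite _
    -- equivalence with punctured W
    let e : α ≃ {w : W // ¬ (w = 0)} :=
      { toFun := fun y' => ⟨⟨y'.1, (hWmem y'.1).2 y'.2.1⟩, by
          intro h
          exact y'.2.2 (by simpa [Submodule.mk_eq_zero] using h)⟩
        invFun := fun w => ⟨w.1.1, ⟨(hWmem w.1.1).1 w.1.2, by
          intro h
          exact w.2 (Subtype.ext h)⟩⟩
        left_inv := fun y' => by ext <;> rfl
        right_inv := fun w => by ext <;> rfl }
    have hcard : Nat.card α = Fintype.card W - 1 := by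
      rw [Nat.card_eq_fintype_card, Fintype.card_congr e, Fintype.card_subtype_compl,
        Fintype.card_subtype_eq]
    have h2W : 2 ∣ Fintype.card W := by
      -- y is a nonzero element of W of additive order 2
      have hyW : (⟨y, (hWmem y).2 hy⟩ : W) ≠ 0 := by
        intro h
        exact hy0 (by simpa [Submodule.mk_eq_zero] using h)
      have h2 : 2 • (⟨y, (hWmem y).2 hy⟩ : W) = 0 := by
        apply Subtype.ext
        have : (2 : F) = 0 := by
          have := CharP.cast_eq_zero F 2
          exact_mod_cast this
        calc (2 • (⟨y, (hWmem y).2 hy⟩ : W) : W).1 = (2 : ℕ) • y := rfl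
        _ = ((2 : ℕ) : F) • y := by rw [Nat.cast_smul_eq_nsmul]
        _ = 0 := by rw [Nat.cast_ofNat, this, zero_smul]
      have := addOrderOf_eq_prime h2 hyW
      rw [← this]
      exact addOrderOf_dvd_card
    have hWpos : 0 < Fintype.card W := Fintype.card_pos
    rw [hcard]
    omega
  obtain ⟨y', hy'⟩ := hG.nonempty_fixed_point_of_prime_not_dvd_card α hodd
  -- y' has all coefficients equal
  have hconst : ∀ k : G, y'.1.coeff k = y'.1.coeff 1 := by
    intro k
    have h := (MulAction.mem_fixedPoints.mp hy') k
    have h2 : y'.1 * MonoidAlgebra.single k⁻¹ 1 = y'.1 := congrArg Subtype.val h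
    have h3 := MonoidAlgebra.coeff_mul_single_apply y'.1 (1 : F) k⁻¹ 1
    rw [h2] at h3
    rw [h3, one_mul, inv_inv, mul_one]
  have hc0 : y'.1.coeff 1 ≠ 0 := by
    intro h
    apply y'.2.2
    ext k
    rw [hconst k, h]; rfl
  -- evaluate x * y' at 1
  have : (x * y'.1).coeff 1 = y'.1.coeff 1 := by
    rw [MonoidAlgebra.coeff_mul_apply_right, Finsupp.sum_fintype _ _ (by intro a; simp)]
    have : ∀ a : G, x.coeff (1 * a⁻¹) * y'.1.coeff a = x.coeff a⁻¹ * y'.1.coeff 1 := by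
      intro a; rw [one_mul, hconst a]
    rw [Finset.sum_congr rfl (fun a _ => this a), ← Finset.sum_mul]
    have hsum : ∑ a : G, x.coeff a⁻¹ = aug F G x := by
      rw [aug_sum, ← Equiv.sum_comp (Equiv.inv G) (fun g => x.coeff g)]
      rfl
    rw [hsum, hx, one_mul]
  rw [y'.2.1] at this
  exact hc0 (by rw [← this]; rfl)

end Unit

section Unit2
variable {F : Type*} [Field F] [Fintype F] [CharP F 2] {G : Type*} [Group G] [Fintype G]

lemma no_right_zero_divisor (hG : IsPGroup 2 G) (x : MonoidAlgebra F G)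
    (hx : aug F G x = 1) (y : MonoidAlgebra F G) (hy : y * x = 0) : y = 0 := by
  classical
  by_contra hy0
  let α := {y' : MonoidAlgebra F G // y' * x = 0 ∧ y' ≠ 0}
  have hsmul : ∀ (g : G) (y' : α), (MonoidAlgebra.single g 1 * y'.1) * x = 0 ∧
      MonoidAlgebra.single g 1 * y'.1 ≠ 0 := by
    intro g y'
    constructor
    · rw [mul_assoc, y'.2.1, mul_zero]
    · intro h
      apply y'.2.2
      have : MonoidAlgebra.single g⁻¹ 1 * (MonoidAlgebra.single g 1 * y'.1) = 0 := by
        rw [h, mul_zero]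
      rwa [← mul_assoc, MonoidAlgebra.single_mul_single, inv_mul_cancel, one_mul,
        ← MonoidAlgebra.one_def, one_mul] at this
  letI : SMul G α := ⟨fun g y' => ⟨MonoidAlgebra.single g 1 * y'.1, hsmul g y'⟩⟩
  have smul_def : ∀ (g : G) (y' : α), (g • y').1 = MonoidAlgebra.single g 1 * y'.1 :=
    fun _ _ => rfl
  letI : MulAction G α :=
    { one_smul := by
        intro y'
        apply Subtype.ext
        rw [smul_def, ← MonoidAlgebra.one_def, one_mul]
      mul_smul := by
        intro g h y'
        apply Subtype.ext
        rw [smul_def, smul_def, smul_def, ← mul_assoc, MonoidAlgebra.single_mul_single, one_mul] }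
  have hodd : ¬ (2 ∣ Nat.card α) := by
    let W : Submodule F (MonoidAlgebra F G) := LinearMap.ker (LinearMap.mulRight F x)
    have hWmem : ∀ y' : MonoidAlgebra F G, y' ∈ W ↔ y' * x = 0 := by
      intro y'; simp [W, LinearMap.mem_ker, LinearMap.mulRight_apply]
    haveI : Fintype (MonoidAlgebra F G) := Fintype.ofFinite _
    haveI : Fintype α := Fintype.ofFinite _
    haveI : Fintype W := Fintype.ofFinite _
    let e : α ≃ {w : W // ¬ (w = 0)} :=
      { toFun := fun y' => ⟨⟨y'.1, (hWmem y'.1).2 y'.2.1⟩, by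
          intro h
          exact y'.2.2 (by simpa [Submodule.mk_eq_zero] using h)⟩
        invFun := fun w => ⟨w.1.1, ⟨(hWmem w.1.1).1 w.1.2, by
          intro h
          exact w.2 (Subtype.ext h)⟩⟩
        left_inv := fun y' => by ext; rfl
        right_inv := fun w => by ext; rfl }
    have hcard : Nat.card α = Fintype.card W - 1 := by
      rw [Nat.card_eq_fintype_card, Fintype.card_congr e, Fintype.card_subtype_compl,
        Fintype.card_subtype_eq]
    have h2W : 2 ∣ Fintype.card W := by
      have hyW : (⟨y, (hWmem y).2 hy⟩ : W) ≠ 0 := by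
        intro h
        exact hy0 (by simpa [Submodule.mk_eq_zero] using h)
      have h2 : 2 • (⟨y, (hWmem y).2 hy⟩ : W) = 0 := by
        apply Subtype.ext
        have : (2 : F) = 0 := by
          have := CharP.cast_eq_zero F 2
          exact_mod_cast this
        calc (2 • (⟨y, (hWmem y).2 hy⟩ : W) : W).1 = (2 : ℕ) • y := rfl
        _ = ((2 : ℕ) : F) • y := by rw [Nat.cast_smul_eq_nsmul]
        _ = 0 := by rw [Nat.cast_ofNat, this, zero_smul]
      have := addOrderOf_eq_prime h2 hyW
      rw [← this]
      exact addOrderOf_dvd_card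
    have hWpos : 0 < Fintype.card W := Fintype.card_pos
    rw [hcard]
    omega
  obtain ⟨y', hy'⟩ := hG.nonempty_fixed_point_of_prime_not_dvd_card α hodd
  have hconst : ∀ k : G, y'.1.coeff k = y'.1.coeff 1 := by
    intro k
    have h := (MulAction.mem_fixedPoints.mp hy') k
    have h2 : MonoidAlgebra.single k 1 * y'.1 = y'.1 := congrArg Subtype.val h
    have h3 := MonoidAlgebra.coeff_single_mul_apply y'.1 (1 : F) k k
    rw [h2] at h3
    rw [h3, one_mul, inv_mul_cancel]
  have hc0 : y'.1.coeff 1 ≠ 0 := by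
    intro h
    apply y'.2.2
    ext k
    rw [hconst k, h]; rfl
  have : (y'.1 * x).coeff 1 = y'.1.coeff 1 := by
    rw [MonoidAlgebra.coeff_mul_apply_left, Finsupp.sum_fintype _ _ (by intro a; simp)]
    have : ∀ a : G, y'.1.coeff a * x.coeff (a⁻¹ * 1) = y'.1.coeff 1 * x.coeff a⁻¹ := by
      intro a; rw [mul_one, hconst a]
    rw [Finset.sum_congr rfl (fun a _ => this a), ← Finset.mul_sum]
    have hsum : ∑ a : G, x.coeff a⁻¹ = aug F G x := by
      rw [aug_sum, ← Equiv.sum_comp (Equiv.inv G) (fun g => x.coeff g)]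
      rfl
    rw [hsum, hx, mul_one]
  rw [y'.2.1] at this
  exact hc0 (by rw [← this]; rfl)

lemma isUnit_of_aug_eq_one (hG : IsPGroup 2 G) (x : MonoidAlgebra F G)
    (hx : aug F G x = 1) : IsUnit x := by
  have hinj : Function.Injective (fun y : MonoidAlgebra F G => x * y) := by
    intro a b hab
    have : x * (a - b) = 0 := by
      rw [mul_sub, sub_eq_zero]
      exact hab
    have := no_left_zero_divisor hG x hx _ this
    rwa [sub_eq_zero] at this
  have hinj' : Function.Injective (fun y : MonoidAlgebra F G => y * x) := by
    intro a b hab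
    have : (a - b) * x = 0 := by
      rw [sub_mul, sub_eq_zero]
      exact hab
    have := no_right_zero_divisor hG x hx _ this
    rwa [sub_eq_zero] at this
  obtain ⟨y, hy⟩ := (Finite.injective_iff_surjective.mp hinj) 1
  obtain ⟨z, hz⟩ := (Finite.injective_iff_surjective.mp hinj') 1
  simp only at hy hz
  have hzy : z = y := by
    calc z = z * (x * y) := by rw [hy, mul_one]
    _ = (z * x) * y := by rw [mul_assoc]
    _ = y := by rw [hz, one_mul]
  exact ⟨⟨x, y, hy, by rw [← hzy]; exact hz⟩, rfl⟩

end Unit2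

section Groups
variable (F : Type*) [Field F] (G : Type*) [Group G]

/-- the normalized unit group -/
noncomputable def Vgrp : Subgroup (MonoidAlgebra F G)ˣ where
  carrier := {u | aug F G (u : MonoidAlgebra F G) = 1}
  one_mem' := by simp [Set.mem_setOf_eq, Units.val_one, map_one]
  mul_mem' := by
    intro a b ha hb
    simp only [Set.mem_setOf_eq, Units.val_mul, map_mul] at *
    rw [ha, hb, one_mul]
  inv_mem' := by
    intro a ha
    simp only [Set.mem_setOf_eq] at *
    have : aug F G ((a : (MonoidAlgebra F G)ˣ) : MonoidAlgebra F G)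
        * aug F G ((a⁻¹ : (MonoidAlgebra F G)ˣ) : MonoidAlgebra F G) = 1 := by
      rw [← map_mul, Units.mul_inv, map_one]
    rw [ha, one_mul] at this
    exact this

/-- the unitary subgroup -/
noncomputable def Wgrp : Subgroup (MonoidAlgebra F G)ˣ where
  carrier := {u | aug F G (u : MonoidAlgebra F G) = 1 ∧
    dia (fun g : G => g⁻¹) (u : MonoidAlgebra F G) = ((u⁻¹ : (MonoidAlgebra F G)ˣ) : MonoidAlgebra F G)}
  one_mem' := by
    constructor
    · simp [Units.val_one, map_one]
    · simp only [inv_one, Units.val_one]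
      exact dia_one
  mul_mem' := by
    intro a b ha hb
    constructor
    · simp only [Units.val_mul, map_mul, ha.1, hb.1, one_mul]
    · simp only [Units.val_mul, mul_inv_rev]
      rw [dia_mul, ha.2, hb.2]
  inv_mem' := by
    intro a ha
    constructor
    · have : aug F G ((a : (MonoidAlgebra F G)ˣ) : MonoidAlgebra F G)
          * aug F G ((a⁻¹ : (MonoidAlgebra F G)ˣ) : MonoidAlgebra F G) = 1 := by
        rw [← map_mul, Units.mul_inv, map_one]
      rw [ha.1, one_mul] at this
      exact this
    · rw [← ha.2, dia_dia, inv_inv]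

variable {F G}

lemma Wgrp_le_Vgrp : Wgrp F G ≤ Vgrp F G := fun u hu => hu.1

/-- the statement's set is in bijection with the unitary subgroup -/
lemma card_set_eq_card_Wgrp :
    Nat.card {x : MonoidAlgebra F G |
      aug F G x = 1 ∧ x * dia (fun g : G => g⁻¹) x = 1 ∧ dia (fun g : G => g⁻¹) x * x = 1}
      = Nat.card (Wgrp F G) := by
  apply Nat.card_congr
  refine
    { toFun := fun x => ⟨⟨x.1, dia (fun g : G => g⁻¹) x.1, x.2.2.1, x.2.2.2⟩, ?_, ?_⟩
      invFun := fun u => ⟨(u.1 : MonoidAlgebra F G), ?_, ?_, ?_⟩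
      left_inv := ?_
      right_inv := ?_ }
  · exact x.2.1
  · rfl
  · exact u.2.1
  · rw [u.2.2]; exact u.1.val_inv
  · rw [u.2.2]; exact u.1.inv_val
  · intro x; rfl
  · intro u
    apply Subtype.ext
    apply Units.ext
    rfl

end Groups

section CardV
variable {F : Type*} [Field F] [Fintype F] [CharP F 2] {G : Type*} [Group G] [Fintype G]

lemma card_Vgrp (hG : IsPGroup 2 G) :
    Nat.card (Vgrp F G) = Fintype.card F ^ (Fintype.card G - 1) := by
  classical
  -- step 1 : Vgrp ≃ {x | aug x = 1}
  have e1 : Vgrp F G ≃ {x : MonoidAlgebra F G | aug F G x = 1} := by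
    refine Equiv.ofBijective (fun u => ⟨(u.1 : MonoidAlgebra F G), u.2⟩) ⟨?_, ?_⟩
    · intro u v huv
      exact Subtype.ext (Units.ext (congrArg Subtype.val huv))
    · intro x
      obtain ⟨u, hu⟩ := isUnit_of_aug_eq_one hG x.1 x.2
      refine ⟨⟨u, ?_⟩, Subtype.ext hu⟩
      show aug F G (u : MonoidAlgebra F G) = 1
      rw [hu]; exact x.2
  -- step 2 : {x | aug x = 1} ≃ {x | aug x = 0}
  have e2 : {x : MonoidAlgebra F G | aug F G x = 1} ≃ {x : MonoidAlgebra F G | aug F G x = 0} :=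
    { toFun := fun x => ⟨x.1 - 1, by
        have := x.2
        simp only [Set.mem_setOf_eq] at *
        rw [map_sub, this, map_one, sub_self]⟩
      invFun := fun x => ⟨x.1 + 1, by
        have := x.2
        simp only [Set.mem_setOf_eq] at *
        rw [map_add, this, map_one, zero_add]⟩
      left_inv := fun x => by apply Subtype.ext; simp
      right_inv := fun x => by apply Subtype.ext; simp }
  -- step 3 : MonoidAlgebra ≃ {aug = 0} × F
  have e3 : MonoidAlgebra F G ≃ {x : MonoidAlgebra F G | aug F G x = 0} × F :=
    { toFun := fun x => (⟨x - (aug F G x) • 1, by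
        simp only [Set.mem_setOf_eq]
        rw [map_sub, map_smul, map_one, smul_eq_mul, mul_one, sub_self]⟩, aug F G x)
      invFun := fun p => p.1.1 + p.2 • 1
      left_inv := fun x => by simp
      right_inv := fun p => by
        have hp := p.1.2
        simp only [Set.mem_setOf_eq] at hp
        refine Prod.ext (Subtype.ext ?_) ?_ <;>
          simp [map_add, hp, map_smul] }
  haveI : Fintype (MonoidAlgebra F G) := Fintype.ofFinite _
  have hR : Nat.card (MonoidAlgebra F G) = Fintype.card F ^ Fintype.card G := by
    rw [Nat.card_eq_fintype_card]
    have : Fintype.card (MonoidAlgebra F G) = Fintype.card (G →₀ F) := by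
      apply Fintype.card_congr
      exact MonoidAlgebra.coeffEquiv
    rw [this, Fintype.card_finsupp]
  have hsplit : Nat.card (MonoidAlgebra F G)
      = Nat.card {x : MonoidAlgebra F G | aug F G x = 0} * Fintype.card F := by
    rw [Nat.card_congr e3, Nat.card_prod, Nat.card_eq_fintype_card, Nat.card_eq_fintype_card]
  have hpos : 1 ≤ Fintype.card G := Fintype.card_pos
  have hq : 0 < Fintype.card F := Fintype.card_pos
  have key : Nat.card {x : MonoidAlgebra F G | aug F G x = 0}
      = Fintype.card F ^ (Fintype.card G - 1) := by
    have h1 : Fintype.card F ^ Fintype.card G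
        = Fintype.card F ^ (Fintype.card G - 1) * Fintype.card F := by
      rw [← pow_succ]
      congr 1
      omega
    have := hsplit.symm.trans hR
    rw [h1] at this
    exact Nat.eq_of_mul_eq_mul_right hq this
  rw [Nat.card_congr e1, Nat.card_congr e2, key]

end CardV

section Quot
variable (G : Type*) [Group G]

/-- pairing `g` with `g⁻¹` on elements of order > 2 -/
def Brel : Setoid {g : G // ¬ g ^ 2 = 1} :=
  { r := fun a b => a.1 = b.1 ∨ a.1 = b.1⁻¹
    iseqv := by
      constructor
      · intro a; exact Or.inl rfl
      · intro a b h
        rcases h with h | h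
        · exact Or.inl h.symm
        · exact Or.inr (by rw [h, inv_inv])
      · intro a b c hab hbc
        rcases hab with h | h <;> rcases hbc with h' | h'
        · exact Or.inl (h.trans h')
        · exact Or.inr (h.trans h')
        · exact Or.inr (by rw [h, h'])
        · exact Or.inl (by rw [h, h', inv_inv]) }

variable {G}

lemma sq_ne_one_inv_mem {g : G} (hg : ¬ g ^ 2 = 1) : ¬ g⁻¹ ^ 2 = 1 := by
  intro h
  exact hg (by rw [← inv_inv g, inv_pow, h, inv_one])

variable (G) in
lemma card_G_eq [Fintype G] :
    Fintype.card G = 2 * Nat.card (Quotient (Brel G)) + Nat.card {g : G | g ^ 2 = 1} := by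
  classical
  have h1 : Fintype.card G
      = Fintype.card {g : G // ¬ g ^ 2 = 1} + Fintype.card {g : G // g ^ 2 = 1} := by
    rw [Fintype.card_subtype_compl]
    have hle : Fintype.card {g : G // g ^ 2 = 1} ≤ Fintype.card G :=
      Fintype.card_subtype_le _
    omega
  have h2 : Fintype.card {g : G // ¬ g ^ 2 = 1} = 2 * Fintype.card (Quotient (Brel G)) := by
    let f : {g : G // ¬ g ^ 2 = 1} → Quotient (Brel G) := Quotient.mk (Brel G)
    rw [← Finset.card_univ, Finset.card_eq_sum_card_fiberwise
      (f := f) (t := Finset.univ) (fun x _ => Finset.mem_univ (f x))]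
    have hfib : ∀ q : Quotient (Brel G),
        (Finset.univ.filter fun b => f b = q).card = 2 := by
      intro q
      induction q using Quotient.ind with
      | _ b₀ =>
        have hmem : ¬ (b₀.1⁻¹ ^ 2 = 1) := sq_ne_one_inv_mem b₀.2
        have hne : b₀ ≠ (⟨b₀.1⁻¹, hmem⟩ : {g : G // ¬ g ^ 2 = 1}) := by
          intro h
          apply b₀.2
          have : b₀.1 = b₀.1⁻¹ := congrArg Subtype.val h
          rw [sq, ← eq_inv_iff_mul_eq_one]
          exact this
        have : (Finset.univ.filter fun b => f b = Quotient.mk (Brel G) b₀)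
            = {b₀, ⟨b₀.1⁻¹, hmem⟩} := by
          ext b
          simp only [Finset.mem_filter, Finset.mem_univ, true_and, Finset.mem_insert,
            Finset.mem_singleton, f]
          rw [Quotient.eq]
          show (b.1 = b₀.1 ∨ b.1 = b₀.1⁻¹) ↔ _
          constructor
          · rintro (h | h)
            · exact Or.inl (Subtype.ext h)
            · exact Or.inr (Subtype.ext h)
          · rintro (h | h)
            · exact Or.inl (congrArg Subtype.val h)
            · exact Or.inr (congrArg Subtype.val h)
        rw [this, Finset.card_pair hne]
    rw [Finset.sum_congr rfl (fun q _ => hfib q), Finset.sum_const, smul_eq_mul,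
      Finset.card_univ, mul_comm]
  rw [h1, h2, Nat.card_eq_fintype_card, Nat.card_eq_fintype_card]
  rfl

end Quot

section Inj
variable {F : Type*} [Field F] [Fintype F] [CharP F 2] {G : Type*} [Group G] [Fintype G]

lemma dia_unit_inv_right (A : (MonoidAlgebra F G)ˣ) :
    dia (fun g : G => g⁻¹) (A : MonoidAlgebra F G)
      * dia (fun g : G => g⁻¹) ((A⁻¹ : (MonoidAlgebra F G)ˣ) : MonoidAlgebra F G) = 1 := by
  rw [← dia_mul, Units.inv_mul, dia_one]

lemma dia_unit_inv_left (A : (MonoidAlgebra F G)ˣ) :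
    dia (fun g : G => g⁻¹) ((A⁻¹ : (MonoidAlgebra F G)ˣ) : MonoidAlgebra F G)
      * dia (fun g : G => g⁻¹) (A : MonoidAlgebra F G) = 1 := by
  rw [← dia_mul, Units.mul_inv, dia_one]

/-- the norm map `u ↦ u * u*` as a function on `Vgrp` -/
noncomputable def normMap (u : Vgrp F G) : MonoidAlgebra F G :=
  ((u : (MonoidAlgebra F G)ˣ) : MonoidAlgebra F G)
    * dia (fun g : G => g⁻¹) ((u : (MonoidAlgebra F G)ˣ) : MonoidAlgebra F G)

lemma normMap_eq_of_rel (u v : Vgrp F G)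
    (h : u⁻¹ * v ∈ (Wgrp F G).subgroupOf (Vgrp F G)) : normMap v = normMap u := by
  have h' : ((u⁻¹ * v : Vgrp F G) : (MonoidAlgebra F G)ˣ) ∈ Wgrp F G :=
    (Subgroup.mem_subgroupOf).mp h
  set A : (MonoidAlgebra F G)ˣ := (u : (MonoidAlgebra F G)ˣ)
  set B : (MonoidAlgebra F G)ˣ := (v : (MonoidAlgebra F G)ˣ)
  have hC : ((u⁻¹ * v : Vgrp F G) : (MonoidAlgebra F G)ˣ) = A⁻¹ * B := rfl
  rw [hC] at h'
  have hst : dia (fun g : G => g⁻¹) ((A⁻¹ * B : (MonoidAlgebra F G)ˣ) : MonoidAlgebra F G)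
      = (((A⁻¹ * B)⁻¹ : (MonoidAlgebra F G)ˣ) : MonoidAlgebra F G) := h'.2
  have hB : (B : MonoidAlgebra F G)
      = (A : MonoidAlgebra F G) * ((A⁻¹ * B : (MonoidAlgebra F G)ˣ) : MonoidAlgebra F G) := by
    rw [Units.val_mul, ← mul_assoc, ← Units.val_mul, mul_inv_cancel, Units.val_one, one_mul]
  show (B : MonoidAlgebra F G) * dia (fun g : G => g⁻¹) (B : MonoidAlgebra F G)
      = (A : MonoidAlgebra F G) * dia (fun g : G => g⁻¹) (A : MonoidAlgebra F G)
  rw [hB, dia_mul, hst]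
  calc (A : MonoidAlgebra F G) * ↑(A⁻¹ * B) * (↑(A⁻¹ * B)⁻¹ * dia (fun g : G => g⁻¹) ↑A)
      = (A : MonoidAlgebra F G) * (↑(A⁻¹ * B) * ↑(A⁻¹ * B)⁻¹) * dia (fun g : G => g⁻¹) ↑A := by
        rw [mul_assoc, mul_assoc, mul_assoc]
    _ = (A : MonoidAlgebra F G) * dia (fun g : G => g⁻¹) ↑A := by
        rw [← Units.val_mul, mul_inv_cancel, Units.val_one, mul_one]

lemma rel_of_normMap_eq (u v : Vgrp F G) (h : normMap u = normMap v) :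
    u⁻¹ * v ∈ (Wgrp F G).subgroupOf (Vgrp F G) := by
  set A : (MonoidAlgebra F G)ˣ := (u : (MonoidAlgebra F G)ˣ)
  set B : (MonoidAlgebra F G)ˣ := (v : (MonoidAlgebra F G)ˣ)
  rw [Subgroup.mem_subgroupOf]
  have hC : ((u⁻¹ * v : Vgrp F G) : (MonoidAlgebra F G)ˣ) = A⁻¹ * B := rfl
  rw [hC]
  have haug : aug F G ((A⁻¹ * B : (MonoidAlgebra F G)ˣ) : MonoidAlgebra F G) = 1 :=
    (Subgroup.mul_mem _ (Subgroup.inv_mem _ u.2) v.2 : (u⁻¹ * v : Vgrp F G).1 ∈ Vgrp F G)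
  have hmain : ((A⁻¹ * B : (MonoidAlgebra F G)ˣ) : MonoidAlgebra F G)
      * dia (fun g : G => g⁻¹) ((A⁻¹ * B : (MonoidAlgebra F G)ˣ) : MonoidAlgebra F G) = 1 := by
    rw [Units.val_mul, dia_mul]
    have h1 : (B : MonoidAlgebra F G) * dia (fun g : G => g⁻¹) (B : MonoidAlgebra F G)
        = (A : MonoidAlgebra F G) * dia (fun g : G => g⁻¹) (A : MonoidAlgebra F G) := h.symm
    calc ((A⁻¹ : (MonoidAlgebra F G)ˣ) : MonoidAlgebra F G) * (B : MonoidAlgebra F G)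
          * (dia (fun g : G => g⁻¹) (B : MonoidAlgebra F G)
            * dia (fun g : G => g⁻¹) ((A⁻¹ : (MonoidAlgebra F G)ˣ) : MonoidAlgebra F G))
        = ((A⁻¹ : (MonoidAlgebra F G)ˣ) : MonoidAlgebra F G)
          * ((B : MonoidAlgebra F G) * dia (fun g : G => g⁻¹) (B : MonoidAlgebra F G))
          * dia (fun g : G => g⁻¹) ((A⁻¹ : (MonoidAlgebra F G)ˣ) : MonoidAlgebra F G) := by
          rw [mul_assoc, mul_assoc, mul_assoc]
      _ = ((A⁻¹ : (MonoidAlgebra F G)ˣ) : MonoidAlgebra F G)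
          * ((A : MonoidAlgebra F G) * dia (fun g : G => g⁻¹) (A : MonoidAlgebra F G))
          * dia (fun g : G => g⁻¹) ((A⁻¹ : (MonoidAlgebra F G)ˣ) : MonoidAlgebra F G) := by
          rw [h1]
      _ = (((A⁻¹ : (MonoidAlgebra F G)ˣ) : MonoidAlgebra F G) * (A : MonoidAlgebra F G))
          * (dia (fun g : G => g⁻¹) (A : MonoidAlgebra F G)
            * dia (fun g : G => g⁻¹) ((A⁻¹ : (MonoidAlgebra F G)ˣ) : MonoidAlgebra F G)) := by
          rw [mul_assoc, mul_assoc, mul_assoc]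
      _ = 1 := by
          rw [← Units.val_mul, inv_mul_cancel, Units.val_one, one_mul, ← dia_mul,
            ← Units.val_mul, inv_mul_cancel, Units.val_one, dia_one]
  refine ⟨haug, ?_⟩
  -- from `w * st w = 1` deduce `st w = w⁻¹`
  have := congrArg (fun t => (((A⁻¹ * B)⁻¹ : (MonoidAlgebra F G)ˣ) : MonoidAlgebra F G) * t) hmain
  simp only [mul_one] at this
  rw [← mul_assoc, ← Units.val_mul, inv_mul_cancel, Units.val_one, one_mul] at this
  exact this

end Inj

section Inj2
variable {F : Type*} [Field F] [Fintype F] [CharP F 2] {G : Type*} [Group G] [Fintype G]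

lemma normMap_ext (u v : Vgrp F G)
    (hB : ∀ b : {g : G // ¬ g ^ 2 = 1}, (normMap u).coeff b.1 = (normMap v).coeff b.1) :
    normMap u = normMap v := by
  ext k
  by_cases hk : k ^ 2 = 1
  · by_cases hk1 : k = 1
    · subst hk1
      show (_ * dia (fun g : G => g⁻¹) _).coeff 1 = (_ * dia (fun g : G => g⁻¹) _).coeff 1
      rw [mul_dia_apply_one, mul_dia_apply_one, u.2, v.2]
    · show (_ * dia (fun g : G => g⁻¹) _).coeff k = (_ * dia (fun g : G => g⁻¹) _).coeff k
      rw [mul_dia_apply_order_two _ k hk hk1, mul_dia_apply_order_two _ k hk hk1]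
  · exact hB ⟨k, hk⟩

lemma card_quot_le :
    Nat.card (Vgrp F G ⧸ (Wgrp F G).subgroupOf (Vgrp F G))
      ≤ Fintype.card F ^ Nat.card (Quotient (Brel G)) := by
  classical
  let Phi : Vgrp F G → (Quotient (Brel G) → F) := fun u q =>
    Quotient.liftOn q (fun b => (normMap u).coeff b.1) (by
      rintro a b (hab | hab) <;>
        [skip; skip] <;> show (normMap u).coeff a.1 = (normMap u).coeff b.1
      · rw [hab]
      · rw [hab]
        exact mul_dia_symm _ _)
  let Phibar : (Vgrp F G ⧸ (Wgrp F G).subgroupOf (Vgrp F G)) → (Quotient (Brel G) → F) :=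
    fun c => Quotient.liftOn' c Phi (by
      intro u v huv
      have h : u⁻¹ * v ∈ (Wgrp F G).subgroupOf (Vgrp F G) :=
        (QuotientGroup.leftRel_apply).mp huv
      have heq := normMap_eq_of_rel u v h
      funext q
      induction q using Quotient.ind with
      | _ b => show (normMap u).coeff b.1 = (normMap v).coeff b.1; rw [heq])
  have hinj : Function.Injective Phibar := by
    intro c1 c2 hc
    induction c1, c2 using Quotient.inductionOn₂' with
    | _ u v =>
      have hB : ∀ b : {g : G // ¬ g ^ 2 = 1}, (normMap u).coeff b.1 = (normMap v).coeff b.1 := by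
        intro b
        exact congrFun hc (Quotient.mk (Brel G) b)
      have heq := normMap_ext u v hB
      exact Quotient.sound' (QuotientGroup.leftRel_apply.mpr (rel_of_normMap_eq u v heq))
  have hle := Nat.card_le_card_of_injective Phibar hinj
  rwa [Nat.card_fun, Nat.card_eq_fintype_card (α := F)] at hle

end Inj2

/-- Theorem 2 of the paper: for `F` a finite field of characteristic `2`
and `G` a finite `2`-group, `|F|^((|G| + |G{2}|)/2 - 1)` divides `|V_*(FG)|`, where
`G{2} = {g ∈ G : g² = 1}` and `*` is the canonical involution. -/
theorem card_field_pow_dvd_card_unitary_char_two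
    (F : Type*) [Field F] [Fintype F] [CharP F 2]
    (G : Type*) [Group G] [Fintype G] (hG : IsPGroup 2 G) :
    Fintype.card F ^ ((Fintype.card G + Nat.card {g : G | g ^ 2 = 1}) / 2 - 1) ∣
      Nat.card {x : MonoidAlgebra F G |
        aug F G x = 1 ∧ x * dia (fun g : G => g⁻¹) x = 1 ∧ dia (fun g : G => g⁻¹) x * x = 1} := by
  classical
  set q := Fintype.card F with hq
  set n := Fintype.card G with hn0
  set t := Nat.card {g : G | g ^ 2 = 1} with ht0
  set Qc := Nat.card (Quotient (Brel G)) with hQc0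
  set c := Nat.card (Vgrp F G ⧸ (Wgrp F G).subgroupOf (Vgrp F G)) with hc0
  set w := Nat.card (Wgrp F G) with hw0
  have hw : Nat.card {x : MonoidAlgebra F G |
      aug F G x = 1 ∧ x * dia (fun g : G => g⁻¹) x = 1 ∧ dia (fun g : G => g⁻¹) x * x = 1}
      = w := card_set_eq_card_Wgrp
  have hV : Nat.card (Vgrp F G) = q ^ (n - 1) := card_Vgrp hG
  have hW' : Nat.card ((Wgrp F G).subgroupOf (Vgrp F G)) = w :=
    Nat.card_congr (Subgroup.subgroupOfEquivOfLe Wgrp_le_Vgrp).toEquiv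
  have hcw : c * w = q ^ (n - 1) := by
    rw [← hV, Subgroup.card_eq_card_quotient_mul_card_subgroup
      ((Wgrp F G).subgroupOf (Vgrp F G)), hW']
  have hcle : c ≤ q ^ Qc := card_quot_le
  have hnG : n = 2 * Qc + t := card_G_eq G
  have ht1 : 1 ≤ t := by
    have : Nonempty {g : G | g ^ 2 = 1} := ⟨⟨1, by simp⟩⟩
    exact Nat.one_le_iff_ne_zero.mpr (Nat.card_ne_zero.mpr ⟨this, Set.Finite.to_subtype
      (Set.toFinite _)⟩)
  obtain ⟨m, -, hq2⟩ := FiniteField.card F 2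
  have hcdvd : c ∣ 2 ^ ((m : ℕ) * (n - 1)) := by
    have h0 : c ∣ q ^ (n - 1) := Dvd.intro w hcw
    refine h0.trans ?_
    rw [hq, hq2, ← pow_mul]
  obtain ⟨a, ha, hca⟩ := (Nat.dvd_prime_pow Nat.prime_two).mp hcdvd
  have hcQ : c ∣ q ^ Qc := by
    have h1 : (2 : ℕ) ^ a ≤ 2 ^ ((m : ℕ) * Qc) := by
      rw [← hca]
      calc c ≤ q ^ Qc := hcle
      _ = 2 ^ ((m : ℕ) * Qc) := by rw [hq, hq2, ← pow_mul]
    have h2 : a ≤ (m : ℕ) * Qc := (Nat.pow_le_pow_iff_right (by norm_num)).mp h1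
    rw [hca, hq, hq2, ← pow_mul]
    exact pow_dvd_pow 2 h2
  obtain ⟨d, hd⟩ := hcQ
  have hexp : n - 1 = Qc + ((n + t) / 2 - 1) := by omega
  have hcpos : 0 < c := by
    rw [hca]
    exact pow_pos (by norm_num) a
  have hw_eq : w = d * q ^ ((n + t) / 2 - 1) := by
    have h1 : c * w = c * (d * q ^ ((n + t) / 2 - 1)) := by
      rw [hcw, hexp, pow_add, hd]
      ring
    exact Nat.eq_of_mul_eq_mul_left hcpos h1
  rw [hw, hw_eq]
  exact Dvd.intro_left d rfl
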